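/- Let a ∈ (1/2, 2/3]. Define d_0 = t_1; d_n = min{(t_1+1)/1, …, (t_n+1)/n, t_{n+1}/(n+1)} for integers 1 ≤ n < σ_a; and d_{σ_a} = min{(t_1+1)/1, …, (t_{σ_a}+1)/σ_a} if σ_a < ∞. Then for every x ∈ [0, 1) and all integers n, k with 0 ≤ n ≤ σ_a and 0 ≤ k ≤ σ_a(x), one has d_n ≥ t_1 and t_k(x) ≥ k·d_n − 1{n ≠ 0}. -/

import Mathlib

open MeasureTheory Filter Set ProbabilityTheory
open scoped ENNReal Classical Topology

noncomputable section

/-- The map `T_a` (extended to a total function; on the paper's domain it agrees with `T_a`,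
and `T_{2/3}(1) = 0`). -/
def Tmap (a x : ℝ) : ℝ := if x < 1 then (x + 1) / a else (x - 1) / a

/-- `κ_a(x) ∈ ℕ∞`: the first entry time of the orbit of `x` under `T_a` into the hole
`I_a = ((2a-1)/(1-a), 1)`. -/
def kappa (a x : ℝ) : ℕ∞ :=
  ⨅ (k : ℕ) (_ : (Tmap a)^[k] x ∈ Set.Ioo ((2 * a - 1) / (1 - a)) 1), (k : ℕ∞)

/-- `δ_k(x)` -/
def deltaF (a x : ℝ) (k : ℕ) : ℝ := if (Tmap a)^[k] x < 1 then 1 else 0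

/-- `L_k(x)` -/
def Lnat (a x : ℝ) (k : ℕ) : ℕ :=
  ((Finset.range k).filter fun i => (Tmap a)^[i] x < 1).card

/-- the `k`-th term of the series `∑_{k=0}^{κ_a(x)} δ_k(x) (p/λ)^{k+1} (q/p)^{L_k(x)}` -/
def lamTerm (a p x lam : ℝ) (k : ℕ) : ℝ :=
  if (k : ℕ∞) ≤ kappa a x then
    deltaF a x k * (p / lam) ^ (k + 1) * ((1 - p) / p) ^ (Lnat a x k)
  else 0

/-- `λ` is a positive solution of the equation defining `λ_a`. -/
def IsLamSol (a p lam : ℝ) : Prop := 0 < lam ∧ HasSum (lamTerm a p 0 lam) 1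

/-- `V(x) = ∑_{k=0}^{κ_a} (p/λ_a)^k (q/p)^{L_k} 1{T_a^k(0) ≤ x}` -/
def Vfun (a p lam x : ℝ) : ℝ :=
  ∑' k : ℕ, if (k : ℕ∞) ≤ kappa a 0 ∧ (Tmap a)^[k] 0 ≤ x then
    (p / lam) ^ k * ((1 - p) / p) ^ (Lnat a 0 k) else 0

/-- `F̄_a(y) = ∑_{k=0}^{κ_a(y)} δ_k(y) (p/λ_a)^{k+1} (q/p)^{L_k(y)}`. -/
def Fbar (a p lam y : ℝ) : ℝ := ∑' k, lamTerm a p y lam k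

/-- The set of return times to `[0,1)` of the orbit of `x` under `T_a`. -/
def RetSet (a x : ℝ) : Set ℕ :=
  {n | 1 ≤ n ∧ (n : ℕ∞) ≤ kappa a x ∧ (Tmap a)^[n] x < 1}

/-- `σ_a(x)`: the total number of returns to `[0,1)`. -/
def sigmaRet (a x : ℝ) : ℕ∞ := (RetSet a x).encard

/-- `t_k(x)`: the `k`-th return time to `[0,1)` (`t_0(x) = 0`). -/
def retTime (a x : ℝ) (k : ℕ) : ℕ :=
  if k = 0 then 0 else Nat.nth (· ∈ RetSet a x) (k - 1)

/-- The quantities `d_n` from the key lemma on return times. -/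
def dfun (a : ℝ) (n : ℕ) : ℝ :=
  if n = 0 then (retTime a 0 1 : ℝ)
  else if (n : ℕ∞) < sigmaRet a 0 then
    min (sInf ((fun j : ℕ => ((retTime a 0 j : ℝ) + 1) / (j : ℝ)) '' Set.Icc 1 n))
      ((retTime a 0 (n + 1) : ℝ) / ((n : ℝ) + 1))
  else sInf ((fun j : ℕ => ((retTime a 0 j : ℝ) + 1) / (j : ℝ)) '' Set.Icc 1 n)

/-! Both branches of `T_a` are increasing, so two orbits starting at `y' ≤ y < 1` stay ordered
until one of them returns below `1`: the lower one returns first, or at the same time to a lower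
point. A point of `[0, 1)` returns at all iff it lies left of the hole, so the lower orbit also
survives at least as long. Compare the return times of `x` with those of `0` one by one. While they
agree, the bound along the orbit of `0` applies. At the first disagreement `x` returns strictly
later, which pays for the `- 1`, and the argument restarts from that return point of `x`. The bound
along the orbit of `0` follows in the same way from its first `n + 1` return times, which is
exactly what `d_n` encodes. -/

namespace Nat

theorem lt_card_toFinset_of_lt_encard {p : ℕ → Prop} {n : ℕ}
    (h : (n : ℕ∞) < (Set.ofPred p).encard) :
    ∀ hf : (Set.ofPred p).Finite, n < hf.toFinset.card := by
  intro hf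
  rw [hf.encard_eq_coe_toFinset_card] at h
  exact_mod_cast h

theorem encard_eq_count_add_encard (S : Set ℕ) (n : ℕ) :
    S.encard = count (· ∈ S) n + {k | n + k ∈ S}.encard := by
  have hsplit : S = ↑((Finset.range n).filter (· ∈ S)) ∪ (n + ·) '' {k | n + k ∈ S} := by
    ext k
    simp only [Finset.coe_filter, Finset.mem_range, mem_union, mem_ofPred_eq, mem_image]
    constructor
    · intro hk
      rcases lt_or_ge k n with h | h
      · exact Or.inl ⟨h, hk⟩
      · exact Or.inr ⟨k - n, by rwa [Nat.add_sub_cancel' h], Nat.add_sub_cancel' h⟩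
    · rintro (⟨-, hk⟩ | ⟨k, hk, rfl⟩) <;> assumption
  rw [count_eq_card_filter_range, ← Set.encard_coe_eq_coe_finsetCard,
    ← (add_right_injective n).encard_image {k | n + k ∈ S}, ← Set.encard_union_eq, ← hsplit]
  refine Set.disjoint_left.2 ?_
  rintro _ hk ⟨k, -, rfl⟩
  simp at hk

theorem encard_eq_count_add_one_add {S : Set ℕ} {j : ℕ} (hj : j ∈ S) :
    S.encard = count (· ∈ S) j + 1 + {s | 0 < s ∧ j + s ∈ S}.encard := by
  have hins : {k | j + k ∈ S} = insert 0 {s | 0 < s ∧ j + s ∈ S} := by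
    ext (_ | k) <;> simp [hj]
  rw [encard_eq_count_add_encard S j, hins, Set.encard_insert_of_notMem (by simp)]
  ring

theorem count_add_of_mem {S T : Set ℕ} {j t : ℕ} (hT : T = {s | 0 < s ∧ j + s ∈ S})
    (hj : j ∈ S) (ht : 0 < t) :
    count (· ∈ S) (j + t) = count (· ∈ S) j + 1 + count (· ∈ T) t := by
  subst hT
  obtain ⟨t, rfl⟩ := Nat.exists_eq_add_one_of_ne_zero ht.ne'
  rw [count_add, count_succ', count_succ']
  simp [hj, add_assoc, add_comm 1]

end Nat

variable {a x y : ℝ}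

theorem natCast_le_kappa_iff {n : ℕ} :
    (n : ℕ∞) ≤ kappa a x ↔ ∀ i < n, (Tmap a)^[i] x ∉ Ioo ((2 * a - 1) / (1 - a)) 1 := by
  simp only [kappa, le_iInf_iff, Nat.cast_le]
  exact ⟨fun h i hi hmem => (h i hmem).not_gt hi, fun h i hmem => not_lt.1 fun hi => h i hi hmem⟩

theorem retSet_iterate {j : ℕ} (hj : (j : ℕ∞) ≤ kappa a x) :
    RetSet a ((Tmap a)^[j] x) = {s | 0 < s ∧ j + s ∈ RetSet a x} := by
  rw [natCast_le_kappa_iff] at hj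
  ext s
  simp only [RetSet, mem_ofPred_eq, natCast_le_kappa_iff, ← Function.iterate_add_apply]
  constructor
  · rintro ⟨hs, hhole, hret⟩
    refine ⟨hs, by omega, fun i hi => ?_, by rwa [add_comm]⟩
    rcases lt_or_ge i j with hij | hij
    · exact hj i hij
    · simpa [Nat.sub_add_cancel hij] using hhole (i - j) (by omega)
  · rintro ⟨hs, -, hhole, hret⟩
    exact ⟨hs, fun i hi => hhole (i + j) (by omega), by rwa [add_comm]⟩

theorem retTime_zero (a x : ℝ) : retTime a x 0 = 0 := rfl

theorem natCast_lt_sigmaRet_iff {k : ℕ} :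
    (k : ℕ∞) < sigmaRet a x ↔ ((k + 1 : ℕ) : ℕ∞) ≤ sigmaRet a x := by
  rw [Nat.cast_succ, ENat.add_one_le_iff (ENat.natCast_ne_top k)]

theorem retTime_succ_mem {k : ℕ} (hk : (k : ℕ∞) < sigmaRet a x) :
    retTime a x (k + 1) ∈ RetSet a x :=
  Nat.nth_mem k (Nat.lt_card_toFinset_of_lt_encard hk)

theorem count_retTime_succ {k : ℕ} (hk : (k : ℕ∞) < sigmaRet a x) :
    Nat.count (· ∈ RetSet a x) (retTime a x (k + 1)) = k :=
  Nat.count_nth (Nat.lt_card_toFinset_of_lt_encard hk)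

theorem retTime_count_succ {n : ℕ} (hn : n ∈ RetSet a x) :
    retTime a x (Nat.count (· ∈ RetSet a x) n + 1) = n :=
  Nat.nth_count hn

theorem retTime_le_kappa {k : ℕ} (hk : (k : ℕ∞) ≤ sigmaRet a x) :
    (retTime a x k : ℕ∞) ≤ kappa a x := by
  rcases k with _ | k
  · simp [retTime_zero]
  · exact (retTime_succ_mem (natCast_lt_sigmaRet_iff.2 hk)).2.1

theorem iterate_retTime_lt_one (hx : x < 1) {k : ℕ} (hk : (k : ℕ∞) ≤ sigmaRet a x) :
    (Tmap a)^[retTime a x k] x < 1 := by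
  rcases k with _ | k
  · exact hx
  · exact (retTime_succ_mem (natCast_lt_sigmaRet_iff.2 hk)).2.2

theorem retSet_iterate_retTime {M : ℕ} (hM : (M : ℕ∞) ≤ sigmaRet a x) :
    RetSet a ((Tmap a)^[retTime a x M] x) = {s | 0 < s ∧ retTime a x M + s ∈ RetSet a x} :=
  retSet_iterate (retTime_le_kappa hM)

theorem sigmaRet_eq_add {M : ℕ} (hM : (M : ℕ∞) ≤ sigmaRet a x) :
    sigmaRet a x = M + sigmaRet a ((Tmap a)^[retTime a x M] x) := by
  rcases M with _ | M
  · simp [retTime_zero]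
  · have hM' := natCast_lt_sigmaRet_iff.2 hM
    rw [sigmaRet, sigmaRet, retSet_iterate_retTime hM,
      Nat.encard_eq_count_add_one_add (retTime_succ_mem hM'), count_retTime_succ hM']
    push_cast
    rfl

theorem add_le_sigmaRet_iff {M i : ℕ} (hM : (M : ℕ∞) ≤ sigmaRet a x) :
    ((M + i : ℕ) : ℕ∞) ≤ sigmaRet a x ↔ (i : ℕ∞) ≤ sigmaRet a ((Tmap a)^[retTime a x M] x) := by
  rw [sigmaRet_eq_add hM, Nat.cast_add, ENat.add_le_add_iff_left (ENat.natCast_ne_top M)]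

theorem retTime_add {M i : ℕ} (hM : (M : ℕ∞) ≤ sigmaRet a x)
    (hi : (i : ℕ∞) ≤ sigmaRet a ((Tmap a)^[retTime a x M] x)) :
    retTime a x (M + i) = retTime a x M + retTime a ((Tmap a)^[retTime a x M] x) i := by
  rcases i with _ | i
  · rfl
  rcases M with _ | M
  · simp [retTime_zero]
  have hM' := natCast_lt_sigmaRet_iff.2 hM
  have hi' := natCast_lt_sigmaRet_iff.2 hi
  have hmem := retTime_succ_mem hi'
  rw [retSet_iterate_retTime hM] at hmem
  rw [← retTime_count_succ hmem.2,
    Nat.count_add_of_mem (retSet_iterate_retTime hM) (retTime_succ_mem hM') hmem.1,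
    count_retTime_succ hM', count_retTime_succ hi']
  ring_nf

theorem iterate_retTime_add {M i : ℕ} (hM : (M : ℕ∞) ≤ sigmaRet a x)
    (hi : (i : ℕ∞) ≤ sigmaRet a ((Tmap a)^[retTime a x M] x)) :
    (Tmap a)^[retTime a x (M + i)] x =
      (Tmap a)^[retTime a ((Tmap a)^[retTime a x M] x) i] ((Tmap a)^[retTime a x M] x) := by
  rw [retTime_add hM hi, add_comm, Function.iterate_add_apply]

theorem Tmap_monotoneOn_Iio (ha : 0 < a) : MonotoneOn (Tmap a) (Iio 1) := by
  intro y hy z hz hyz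
  simp only [Tmap, if_pos (show y < 1 from hy), if_pos (show z < 1 from hz)]
  gcongr

theorem Tmap_monotoneOn_Ici (ha : 0 < a) : MonotoneOn (Tmap a) (Ici 1) := by
  intro y hy z hz hyz
  simp only [Tmap, if_neg (not_lt.2 (show 1 ≤ y from hy)), if_neg (not_lt.2 (show 1 ≤ z from hz))]
  gcongr

theorem iterate_Tmap_nonneg (ha : 0 < a) (hx : 0 ≤ x) (n : ℕ) : 0 ≤ (Tmap a)^[n] x := by
  induction n with
  | zero => exact hx
  | succ n ih =>
    rw [Function.iterate_succ_apply', Tmap]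
    split_ifs with h
    · positivity
    · exact div_nonneg (by linarith) ha.le

theorem iterate_Tmap_le_iterate (ha : 0 < a) {y' : ℝ} (hle : y' ≤ y) (hy : y < 1) {n : ℕ}
    (h' : ∀ i, 1 ≤ i → i < n → 1 ≤ (Tmap a)^[i] y')
    (h : ∀ i, 1 ≤ i → i < n → 1 ≤ (Tmap a)^[i] y) :
    (Tmap a)^[n] y' ≤ (Tmap a)^[n] y := by
  induction n with
  | zero => exact hle
  | succ n ih =>
    rw [Function.iterate_succ_apply', Function.iterate_succ_apply']
    have hle' := ih (fun i hi hin => h' i hi (by omega)) (fun i hi hin => h i hi (by omega))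
    rcases Nat.eq_zero_or_pos n with rfl | hn
    · exact Tmap_monotoneOn_Iio ha (hle.trans_lt hy) hy hle
    · exact Tmap_monotoneOn_Ici ha (h' n hn (by omega)) (h n hn (by omega)) hle'

/-- `1 / (1 - a)` is the fixed point of the upper branch, which expands distances to it by `1 / a`,
and the lower branch sends the left end of the hole to it. -/
theorem one_div_one_sub_sub_iterate_Tmap (ha : 0 < a) (ha1 : a < 1) (hy : y < 1) {n : ℕ}
    (h : ∀ i, 1 ≤ i → i ≤ n → 1 ≤ (Tmap a)^[i] y) :
    1 / (1 - a) - (Tmap a)^[n + 1] y = ((2 * a - 1) / (1 - a) - y) / a ^ (n + 1) := by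
  have h1a : 1 - a ≠ 0 := by linarith
  induction n with
  | zero =>
    rw [Function.iterate_one, Tmap, if_pos hy]
    field_simp
    ring
  | succ n ih =>
    rw [Function.iterate_succ_apply', Tmap, if_neg (not_lt.2 (h (n + 1) (by omega) le_rfl)),
      pow_succ, ← div_div, ← ih fun i hi hin => h i hi (by omega)]
    field_simp
    ring

theorem exists_iterate_Tmap_lt_one (ha : 0 < a) (ha1 : a < 1) (hy : y < 1)
    (hyc : y < (2 * a - 1) / (1 - a)) : ∃ r, 1 ≤ r ∧ (Tmap a)^[r] y < 1 := by
  by_contra! hcon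
  obtain ⟨n, hn⟩ := pow_unbounded_of_one_lt ((1 / (1 - a) - 1) / ((2 * a - 1) / (1 - a) - y))
    ((one_lt_inv₀ ha).2 ha1)
  have hdist := one_div_one_sub_sub_iterate_Tmap ha ha1 hy (n := n) fun i hi _ => hcon i hi
  have hpow : a⁻¹ ^ n ≤ a⁻¹ ^ (n + 1) :=
    pow_le_pow_right₀ ((one_le_inv₀ ha).2 ha1.le) n.le_succ
  have hgap : 0 < (2 * a - 1) / (1 - a) - y := by linarith
  rw [div_lt_iff₀ hgap] at hn
  rw [div_eq_mul_inv _ (a ^ _), ← inv_pow] at hdist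
  nlinarith [hcon (n + 1) n.succ_pos]

theorem one_le_iterate_Tmap_of_le (ha : 0 < a) (ha1 : a < 1) (hy : y < 1)
    (hcy : (2 * a - 1) / (1 - a) ≤ y) : ∀ n, 1 ≤ n → 1 ≤ (Tmap a)^[n] y := by
  intro n
  induction n using Nat.strong_induction_on with
  | _ n ih =>
    intro hn
    obtain ⟨n, rfl⟩ := Nat.exists_eq_add_one_of_ne_zero (by omega : n ≠ 0)
    have hdist := one_div_one_sub_sub_iterate_Tmap ha ha1 hy (n := n)
      fun i hi hin => ih i (by omega) hi
    have hnonpos : ((2 * a - 1) / (1 - a) - y) / a ^ (n + 1) ≤ 0 :=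
      div_nonpos_of_nonpos_of_nonneg (by linarith) (by positivity)
    have hfix : 1 ≤ 1 / (1 - a) := by rw [le_div_iff₀ (by linarith)]; linarith
    linarith

theorem sigmaRet_pos_iff (ha : 0 < a) (ha1 : a < 1) (hy : y < 1) :
    0 < sigmaRet a y ↔ y < (2 * a - 1) / (1 - a) := by
  rw [sigmaRet, Set.encard_pos]
  constructor
  · rintro ⟨n, hn1, -, hn⟩
    by_contra! hcy
    exact (one_le_iterate_Tmap_of_le ha ha1 hy hcy n hn1).not_gt hn
  · intro hyc
    have hex := exists_iterate_Tmap_lt_one ha ha1 hy hyc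
    refine ⟨Nat.find hex, (Nat.find_spec hex).1, natCast_le_kappa_iff.2 fun i hi hmem => ?_,
      (Nat.find_spec hex).2⟩
    rcases i with _ | i
    · exact (hmem.1.trans hyc).false
    · exact Nat.find_min hex hi ⟨by omega, hmem.2⟩

theorem one_le_retTime_one (h : 0 < sigmaRet a y) : 1 ≤ retTime a y 1 :=
  (retTime_succ_mem (k := 0) (by simpa using h)).1

theorem one_le_iterate_of_lt_retTime_one (h : 0 < sigmaRet a y) {i : ℕ} (hi : 1 ≤ i)
    (hit : i < retTime a y 1) : 1 ≤ (Tmap a)^[i] y := by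
  have h0 : ((0 : ℕ) : ℕ∞) < sigmaRet a y := by simpa using h
  by_contra! hlt
  refine Nat.count_iff_forall_not.1 (count_retTime_succ h0) i hit ⟨hi, ?_, hlt⟩
  exact (Nat.cast_le.2 hit.le).trans (retTime_succ_mem h0).2.1

theorem retTime_one_le_retTime_one (ha : 0 < a) {y' : ℝ} (hle : y' ≤ y) (hy : y < 1)
    (h' : 0 < sigmaRet a y') (h : 0 < sigmaRet a y) : retTime a y' 1 ≤ retTime a y 1 := by
  by_contra! hlt
  have horder := iterate_Tmap_le_iterate ha hle hy (n := retTime a y 1)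
    (fun i hi hin => one_le_iterate_of_lt_retTime_one h' hi (hin.trans hlt))
    (fun i hi hin => one_le_iterate_of_lt_retTime_one h hi hin)
  have hy' := one_le_iterate_of_lt_retTime_one h' (one_le_retTime_one h) hlt
  have hret := iterate_retTime_lt_one hy (k := 1) (Order.one_le_iff_pos.2 h)
  linarith

theorem iterate_retTime_one_le_of_eq (ha : 0 < a) {y' : ℝ} (hle : y' ≤ y) (hy : y < 1)
    (h' : 0 < sigmaRet a y') (h : 0 < sigmaRet a y) (heq : retTime a y' 1 = retTime a y 1) :
    (Tmap a)^[retTime a y' 1] y' ≤ (Tmap a)^[retTime a y 1] y := by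
  rw [heq]
  exact iterate_Tmap_le_iterate ha hle hy
    (fun i hi hin => one_le_iterate_of_lt_retTime_one h' hi (heq ▸ hin))
    (fun i hi hin => one_le_iterate_of_lt_retTime_one h hi hin)

structure ReturnsAgree (a x' x : ℝ) (m : ℕ) : Prop where
  le_sigmaRet_left : (m : ℕ∞) ≤ sigmaRet a x'
  le_sigmaRet_right : (m : ℕ∞) ≤ sigmaRet a x
  retTime_eq : retTime a x' m = retTime a x m
  iterate_le : (Tmap a)^[retTime a x' m] x' ≤ (Tmap a)^[retTime a x m] x

theorem returnsAgree_zero {x' : ℝ} (h : x' ≤ x) : ReturnsAgree a x' x 0 :=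
  ⟨by simp, by simp, rfl, h⟩

theorem ReturnsAgree.succ_or_lt (ha : 0 < a) (ha1 : a < 1) {x' : ℝ} (hx : x < 1) {m : ℕ}
    (h : ReturnsAgree a x' x m) (hm : ((m + 1 : ℕ) : ℕ∞) ≤ sigmaRet a x) :
    ReturnsAgree a x' x (m + 1) ∨
      ((m + 1 : ℕ) : ℕ∞) ≤ sigmaRet a x' ∧ retTime a x' (m + 1) < retTime a x (m + 1) := by
  have hY := iterate_retTime_lt_one hx h.le_sigmaRet_right
  have hσY := (add_le_sigmaRet_iff h.le_sigmaRet_right).1 hm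
  have hσY' : 0 < sigmaRet a ((Tmap a)^[retTime a x m] x) :=
    Order.one_le_iff_pos.1 (by simpa using hσY)
  have hσU' : 0 < sigmaRet a ((Tmap a)^[retTime a x' m] x') :=
    (sigmaRet_pos_iff ha ha1 (h.iterate_le.trans_lt hY)).2
      (h.iterate_le.trans_lt ((sigmaRet_pos_iff ha ha1 hY).1 hσY'))
  have hσU : ((1 : ℕ) : ℕ∞) ≤ sigmaRet a ((Tmap a)^[retTime a x' m] x') := by
    simpa using Order.one_le_iff_pos.2 hσU'
  have hm' := (add_le_sigmaRet_iff h.le_sigmaRet_left).2 hσU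
  have hsame := h.retTime_eq
  rcases (retTime_one_le_retTime_one ha h.iterate_le hY hσU' hσY').eq_or_lt with heq | hlt
  · refine Or.inl ⟨hm', hm, ?_, ?_⟩
    · rw [retTime_add h.le_sigmaRet_left hσU, retTime_add h.le_sigmaRet_right hσY]
      omega
    · rw [iterate_retTime_add h.le_sigmaRet_left hσU, iterate_retTime_add h.le_sigmaRet_right hσY]
      exact iterate_retTime_one_le_of_eq ha h.iterate_le hY hσU' hσY' heq
  · refine Or.inr ⟨hm', ?_⟩
    rw [retTime_add h.le_sigmaRet_left hσU, retTime_add h.le_sigmaRet_right hσY]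
    omega

theorem mul_sub_le_retTime_of_returnsAgree (ha : 0 < a) (ha1 : a < 1) {x' d ε : ℝ} (hε : ε ≤ 1)
    (hx : x ∈ Ico 0 1) {k : ℕ} (hk : (k : ℕ∞) ≤ sigmaRet a x)
    (hx' : ∀ j ≤ k, (j : ℕ∞) ≤ sigmaRet a x' → j * d - ε ≤ retTime a x' j)
    (hrestart : ∀ l < k, ∀ z ∈ Ico (0 : ℝ) 1, (l : ℕ∞) ≤ sigmaRet a z → l * d - ε ≤ retTime a z l)
    {m : ℕ} (hmk : m ≤ k) (hm : ReturnsAgree a x' x m) : k * d - ε ≤ retTime a x k := by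
  induction hmk using Nat.decreasingInduction with
  | self => simpa [hm.retTime_eq] using hx' k le_rfl hm.le_sigmaRet_left
  | of_succ m hmk ih =>
    have hm1 : ((m + 1 : ℕ) : ℕ∞) ≤ sigmaRet a x := (Nat.cast_le.2 hmk).trans hk
    rcases hm.succ_or_lt ha ha1 hx.2 hm1 with hagree | ⟨hσ', hlt⟩
    · exact ih hagree
    have hfirst := hx' (m + 1) hmk hσ'
    have hgap : (retTime a x' (m + 1) : ℝ) + 1 ≤ retTime a x (m + 1) := by exact_mod_cast hlt
    obtain ⟨l, rfl⟩ : ∃ l, k = m + 1 + l := ⟨k - (m + 1), by omega⟩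
    have hl := (add_le_sigmaRet_iff hm1).1 hk
    have hrest := hrestart l (by omega) _
      ⟨iterate_Tmap_nonneg ha hx.1 _, iterate_retTime_lt_one hx.2 hm1⟩ hl
    rw [retTime_add hm1 hl]
    push_cast at hfirst hrest ⊢
    linarith

theorem mul_sub_le_retTime_of_forall_retTime_zero (ha : 0 < a) (ha1 : a < 1) {d ε : ℝ}
    (hε : ε ≤ 1) {k : ℕ}
    (h0 : ∀ j ≤ k, (j : ℕ∞) ≤ sigmaRet a 0 → j * d - ε ≤ retTime a 0 j)
    (hx : x ∈ Ico 0 1) (hk : (k : ℕ∞) ≤ sigmaRet a x) : k * d - ε ≤ retTime a x k := by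
  induction k using Nat.strong_induction_on generalizing x with
  | _ k ih =>
    exact mul_sub_le_retTime_of_returnsAgree ha ha1 hε hx hk h0
      (fun l hl z hz hlz => ih l hl (fun j hj => h0 j (by omega)) hz hlz) k.zero_le
      (returnsAgree_zero hx.1)

theorem mul_sub_le_retTime_zero (ha : 0 < a) (ha1 : a < 1) {d ε : ℝ} (hε : ε ≤ 1) {N : ℕ}
    (hN : 0 < N) (hpre : ∀ j < N, (j : ℕ∞) ≤ sigmaRet a 0 → j * d - ε ≤ retTime a 0 j)
    (hNd : (N : ℕ∞) ≤ sigmaRet a 0 → N * d ≤ retTime a 0 N) {j : ℕ}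
    (hj : (j : ℕ∞) ≤ sigmaRet a 0) : j * d - ε ≤ retTime a 0 j := by
  induction j using Nat.strong_induction_on with
  | _ j ih =>
    rcases lt_or_ge j N with hjN | hNj
    · exact hpre j hjN hj
    obtain ⟨i, rfl⟩ : ∃ i, j = N + i := ⟨j - N, by omega⟩
    have hσN : (N : ℕ∞) ≤ sigmaRet a 0 := (Nat.cast_le.2 (Nat.le_add_right N i)).trans hj
    have hi := (add_le_sigmaRet_iff hσN).1 hj
    have htail := mul_sub_le_retTime_of_forall_retTime_zero ha ha1 hε
      (fun l hl hlσ => ih l (by omega) hlσ)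
      ⟨iterate_Tmap_nonneg ha le_rfl _, iterate_retTime_lt_one one_pos hσN⟩ hi
    have hhead := hNd hσN
    rw [retTime_add hσN hi]
    push_cast at htail ⊢
    linarith

theorem mul_sub_le_retTime (ha : 0 < a) (ha1 : a < 1) {d ε : ℝ} (hε : ε ≤ 1) {N : ℕ}
    (hN : 0 < N) (hpre : ∀ j < N, (j : ℕ∞) ≤ sigmaRet a 0 → j * d - ε ≤ retTime a 0 j)
    (hNd : (N : ℕ∞) ≤ sigmaRet a 0 → N * d ≤ retTime a 0 N) (hx : x ∈ Ico 0 1) {k : ℕ}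
    (hk : (k : ℕ∞) ≤ sigmaRet a x) : k * d - ε ≤ retTime a x k :=
  mul_sub_le_retTime_of_forall_retTime_zero ha ha1 hε
    (fun _ _ => mul_sub_le_retTime_zero ha ha1 hε hN hpre hNd) hx hk

theorem mul_retTime_one_le_retTime (ha : 0 < a) (ha1 : a < 1) (hx : x ∈ Ico 0 1) {k : ℕ}
    (hk : (k : ℕ∞) ≤ sigmaRet a x) : k * (retTime a 0 1 : ℝ) ≤ retTime a x k := by
  simpa using mul_sub_le_retTime ha ha1 zero_le_one one_pos
    (fun j hj _ => by simp [Nat.lt_one_iff.1 hj, retTime_zero]) (fun _ => by simp) hx hk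

theorem dfun_le_sInf {n : ℕ} (hn : n ≠ 0) :
    dfun a n ≤ sInf ((fun j : ℕ => ((retTime a 0 j : ℝ) + 1) / (j : ℝ)) '' Icc 1 n) := by
  rw [dfun, if_neg hn]
  split_ifs
  · exact min_le_left _ _
  · exact le_rfl

theorem mul_dfun_le {n j : ℕ} (hn : n ≠ 0) (hj : j ∈ Icc 1 n) :
    j * dfun a n ≤ retTime a 0 j + 1 := by
  have hjpos : (0 : ℝ) < j := by exact_mod_cast hj.1
  rw [mul_comm, ← le_div_iff₀ hjpos]
  exact (dfun_le_sInf hn).trans (csInf_le ⟨0, by rintro _ ⟨i, -, rfl⟩; positivity⟩ ⟨j, hj, rfl⟩)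

theorem succ_mul_dfun_le {n : ℕ} (hn : n ≠ 0) (hσ : (n : ℕ∞) < sigmaRet a 0) :
    (n + 1) * dfun a n ≤ retTime a 0 (n + 1) := by
  rw [mul_comm, ← le_div_iff₀ (by positivity), dfun, if_neg hn, if_pos hσ]
  exact min_le_right _ _

theorem retTime_one_le_dfun (ha : 0 < a) (ha1 : a < 1) {n : ℕ}
    (hn : (n : ℕ∞) ≤ sigmaRet a 0) : (retTime a 0 1 : ℝ) ≤ dfun a n := by
  have hP0 {j : ℕ} (hj : (j : ℕ∞) ≤ sigmaRet a 0) :=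
    mul_retTime_one_le_retTime ha ha1 ⟨le_rfl, one_pos⟩ hj
  rcases eq_or_ne n 0 with rfl | hn0
  · simp [dfun]
  have hinf : (retTime a 0 1 : ℝ) ≤
      sInf ((fun j : ℕ => ((retTime a 0 j : ℝ) + 1) / (j : ℝ)) '' Icc 1 n) := by
    refine le_csInf ⟨_, 1, ⟨le_rfl, Nat.one_le_iff_ne_zero.2 hn0⟩, rfl⟩ ?_
    rintro _ ⟨j, hj, rfl⟩
    rw [le_div_iff₀ (by exact_mod_cast hj.1)]
    linarith [hP0 ((Nat.cast_le.2 hj.2).trans hn)]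
  rw [dfun, if_neg hn0]
  split_ifs with hσ
  · refine le_min hinf ?_
    rw [le_div_iff₀ (by positivity)]
    simpa [mul_comm] using hP0 (natCast_lt_sigmaRet_iff.1 hσ)
  · exact hinf

theorem return_time_comparison
    (a : ℝ) (ha : a ∈ Set.Ioc (1/2 : ℝ) (2/3)) :
    ∀ x ∈ Set.Ico (0 : ℝ) 1, ∀ n k : ℕ,
      (n : ℕ∞) ≤ sigmaRet a 0 → (k : ℕ∞) ≤ sigmaRet a x →
      (retTime a 0 1 : ℝ) ≤ dfun a n ∧
      (retTime a x k : ℝ) ≥ (k : ℝ) * dfun a n - (if n ≠ 0 then 1 else 0) := by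
  have ha0 : 0 < a := by linarith [ha.1]
  have ha1 : a < 1 := by linarith [ha.2]
  intro x hx n k hn hk
  refine ⟨retTime_one_le_dfun ha0 ha1 hn, ?_⟩
  rcases eq_or_ne n 0 with rfl | hn0
  · simpa [dfun] using mul_retTime_one_le_retTime ha0 ha1 hx hk
  rw [if_pos hn0, ge_iff_le]
  refine mul_sub_le_retTime ha0 ha1 le_rfl n.succ_pos (fun j hj _ => ?_) (fun hσ => ?_) hx hk
  · rcases j with _ | j
    · simp [retTime_zero]
    · linarith [mul_dfun_le (a := a) hn0 ⟨j.succ_pos, by omega⟩]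
  · exact_mod_cast succ_mul_dfun_le hn0 (natCast_lt_sigmaRet_iff.2 hσ)

end
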